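/- For every parameter θ and every agent n, the expected discounted local reward E[Σ_{t≥0} γ^t r_n(s_{N(n)}(t), a_{N(n)}(t)) | s(0)=s, a(0)=a] under the global policy π_θ depends on the global initial state-action (s,a) only through the neighborhood components (s_{N(n)}, a_{N(n)}); denoting this quantity by Q_n^{π_θ}(s_{N(n)}, a_{N(n)}), the global Q-function decomposes exactly as Q^{π_θ}(s,a) = (1/N)·Σ_{n=1}^N Q_n^{π_θ}(s_{N(n)}, a_{N(n)}) for every s ∈ S, a ∈ A. -/
import Mathlib


open Finset MeasureTheory
open scoped BigOperators Classical

noncomputable section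

/-- Softmax policy with parameter `θ`. -/
def softmaxPol {S A : Type*} [Fintype A] (θ : S → A → ℝ) (s : S) (a : A) : ℝ :=
  Real.exp (θ s a) / ∑ a' : A, Real.exp (θ s a')

/-- Global product softmax policy. -/
def gPolicy {N : ℕ} {S A : Fin N → Type*} [∀ n, Fintype (A n)]
    (θ : ∀ n, S n → A n → ℝ) (s : ∀ n, S n) (a : ∀ n, A n) : ℝ :=
  ∏ n, softmaxPol (θ n) (s n) (a n)

/-- Global product transition kernel. -/
def gKernel {N : ℕ} {S A : Fin N → Type*} (P : ∀ n, S n → A n → S n → ℝ)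
    (s : ∀ n, S n) (a : ∀ n, A n) (s' : ∀ n, S n) : ℝ :=
  ∏ n, P n (s n) (a n) (s' n)

/-- Distribution of the state at time `t` under kernel `K`, policy `p`,
initial state distribution `ρ`. -/
def stateDist {GS GA : Type*} [Fintype GS] [Fintype GA]
    (K : GS → GA → GS → ℝ) (p : GS → GA → ℝ) (ρ : GS → ℝ) : ℕ → GS → ℝ
  | 0 => ρ
  | t + 1 => fun s' => ∑ s : GS, ∑ a : GA, stateDist K p ρ t s * p s a * K s a s'

/-- Expected reward at time `t`. -/
def expReward {GS GA : Type*} [Fintype GS] [Fintype GA]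
    (K : GS → GA → GS → ℝ) (p : GS → GA → ℝ) (R : GS → GA → ℝ) (ρ : GS → ℝ) (t : ℕ) : ℝ :=
  ∑ s : GS, ∑ a : GA, stateDist K p ρ t s * p s a * R s a

/-- Expected discounted reward with initial state distribution `ρ`:
`V^p(ρ) = E[∑_t γ^t R(s(t),a(t)) | s(0) ∼ ρ]`. -/
def valueD {GS GA : Type*} [Fintype GS] [Fintype GA] (γ : ℝ)
    (K : GS → GA → GS → ℝ) (p : GS → GA → ℝ) (R : GS → GA → ℝ) (ρ : GS → ℝ) : ℝ :=
  ∑' t : ℕ, γ ^ t * expReward K p R ρ t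

/-- Point mass at `s0`. -/
def diracD {GS : Type*} (s0 : GS) : GS → ℝ := fun s => if s = s0 then 1 else 0

/-- State value function `V^p(s)`. -/
def valueV {GS GA : Type*} [Fintype GS] [Fintype GA] (γ : ℝ)
    (K : GS → GA → GS → ℝ) (p : GS → GA → ℝ) (R : GS → GA → ℝ) (s0 : GS) : ℝ :=
  valueD γ K p R (diracD s0)

/-- State-action value function `Q^p(s,a) = R(s,a) + γ E_{s' ∼ K(⬝|s,a)}[V^p(s')]`. -/
def valueQ {GS GA : Type*} [Fintype GS] [Fintype GA] (γ : ℝ)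
    (K : GS → GA → GS → ℝ) (p : GS → GA → ℝ) (R : GS → GA → ℝ) (s0 : GS) (a0 : GA) : ℝ :=
  R s0 a0 + γ * ∑ s' : GS, K s0 a0 s' * valueV γ K p R s'

/-- Discounted state occupancy measure `d_ρ^p(s)`. -/
def occup {GS GA : Type*} [Fintype GS] [Fintype GA] (γ : ℝ)
    (K : GS → GA → GS → ℝ) (p : GS → GA → ℝ) (ρ : GS → ℝ) (s : GS) : ℝ :=
  (1 - γ) * ∑' t : ℕ, γ ^ t * stateDist K p ρ t s

/-- Deterministic policy associated with an action-selection map. -/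
def detPol {GS GA : Type*} (f : GS → GA) : GS → GA → ℝ :=
  fun s a => if a = f s then 1 else 0

/-- Squared Euclidean norm of a multi-agent parameter vector. -/
def sqNorm {N : ℕ} {S A : Fin N → Type*} [∀ n, Fintype (S n)] [∀ n, Fintype (A n)]
    (ν : ∀ n, S n → A n → ℝ) : ℝ :=
  ∑ n, ∑ s, ∑ a, (ν n s a) ^ 2

/-- Euclidean norm of a multi-agent parameter vector. -/
def eucNorm {N : ℕ} {S A : Fin N → Type*} [∀ n, Fintype (S n)] [∀ n, Fintype (A n)]
    (ν : ∀ n, S n → A n → ℝ) : ℝ :=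
  Real.sqrt (sqNorm ν)

end

noncomputable section QFunAux

open Finset

set_option maxHeartbeats 1000000

/-! ### Generic pi-type sum/product lemmas -/

lemma pi_sum_prod {ι : Type*} [Fintype ι] [DecidableEq ι] {X : ι → Type*} [∀ i, Fintype (X i)]
    (g : ∀ i, X i → ℝ) :
    ∑ x : ∀ i, X i, ∏ i, g i (x i) = ∏ i, ∑ v, g i v := by
  classical
  rw [Finset.prod_univ_sum, Fintype.piFinset_univ]

lemma sum_pi_prod_aux {ι : Type*} [Fintype ι] [DecidableEq ι] {X : ι → Type*} [∀ i, Fintype (X i)]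
    [∀ i, Nonempty (X i)] (p : ι → Prop) [DecidablePred p] (w : ∀ i, X i → ℝ)
    (hsum : ∀ i, ∑ v, w i v = 1)
    (f : (∀ i, X i) → ℝ)
    (hf : ∀ x y : ∀ i, X i, (∀ i, p i → x i = y i) → f x = f y) :
    ∑ x : ∀ i, X i, (∏ i, w i (x i)) * f x
      = ∑ y : ∀ i : {x // p x}, X (i : ι),
          (∏ i : {x // p x}, w (i : ι) (y i)) *
            f ((Equiv.piEquivPiSubtypeProd p X).symm (y, Classical.arbitrary _)) := by
  set e := Equiv.piEquivPiSubtypeProd p X with he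
  set z0 : ∀ i : {x // ¬ p x}, X (i : ι) := Classical.arbitrary _ with hz0
  have hz : ∑ z : ∀ i : {x // ¬ p x}, X (i : ι),
      ∏ i : {x // ¬ p x}, w (i : ι) (z i) = 1 := by
    rw [pi_sum_prod (fun (i : {x // ¬ p x}) (v : X (i : ι)) => w (i : ι) v)]
    exact Finset.prod_eq_one fun i _ => hsum i
  calc ∑ x : ∀ i, X i, (∏ i, w i (x i)) * f x
      = ∑ q : (∀ i : {x // p x}, X (i:ι)) × (∀ i : {x // ¬ p x}, X (i:ι)),
          (∏ i, w i (e.symm q i)) * f (e.symm q) :=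
        (Equiv.sum_comp e.symm (fun x => (∏ i, w i (x i)) * f x)).symm
    _ = ∑ y : ∀ i : {x // p x}, X (i:ι), ∑ z : ∀ i : {x // ¬ p x}, X (i:ι),
          ((∏ i : {x // p x}, w (i:ι) (y i)) *
          (∏ i : {x // ¬ p x}, w (i:ι) (z i))) * f (e.symm (y, z0)) := by
        rw [Fintype.sum_prod_type]
        refine Finset.sum_congr rfl fun y _ => Finset.sum_congr rfl fun z _ => ?_
        have h1 : f (e.symm (y, z)) = f (e.symm (y, z0)) := by
          refine hf _ _ fun i hi => ?_
          simp [he, Equiv.piEquivPiSubtypeProd_symm_apply, hi]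
        have h2 : (∏ i, w i (e.symm (y, z) i))
            = (∏ i : {x // p x}, w (i:ι) (y i)) *
              (∏ i : {x // ¬ p x}, w (i:ι) (z i)) := by
          rw [← Fintype.prod_subtype_mul_prod_subtype p
            (fun i => w i (e.symm (y, z) i))]
          congr 1
          · exact Finset.prod_congr rfl fun i _ => by
              simp [he, Equiv.piEquivPiSubtypeProd_symm_apply, i.2]
          · exact Finset.prod_congr rfl fun i _ => by
              simp [he, Equiv.piEquivPiSubtypeProd_symm_apply, i.2]
        rw [h1, h2]
    _ = ∑ y : ∀ i : {x // p x}, X (i:ι),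
          (∏ i : {x // p x}, w (i:ι) (y i)) * f (e.symm (y, z0)) := by
        refine Finset.sum_congr rfl fun y _ => ?_
        calc ∑ z : ∀ i : {x // ¬ p x}, X (i:ι),
              ((∏ i : {x // p x}, w (i:ι) (y i)) *
                (∏ i : {x // ¬ p x}, w (i:ι) (z i))) * f (e.symm (y, z0))
            = ∑ z : ∀ i : {x // ¬ p x}, X (i:ι),
                ((∏ i : {x // p x}, w (i:ι) (y i)) * f (e.symm (y, z0))) *
                  (∏ i : {x // ¬ p x}, w (i:ι) (z i)) :=
              Finset.sum_congr rfl fun z _ => by ring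
          _ = ((∏ i : {x // p x}, w (i:ι) (y i)) * f (e.symm (y, z0))) *
                ∑ z : ∀ i : {x // ¬ p x}, X (i:ι),
                  ∏ i : {x // ¬ p x}, w (i:ι) (z i) := by
              rw [Finset.mul_sum]
          _ = (∏ i : {x // p x}, w (i:ι) (y i)) * f (e.symm (y, z0)) := by
              rw [hz, mul_one]

/-- Key lemma: a sum of a local function against a product of per-coordinate
probability weights depends only on the weights at coordinates satisfying `p`. -/
lemma sum_pi_prod_local {ι : Type*} [Fintype ι] [DecidableEq ι] {X : ι → Type*} [∀ i, Fintype (X i)]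
    [∀ i, Nonempty (X i)] (p : ι → Prop) [DecidablePred p] (w w' : ∀ i, X i → ℝ)
    (hw : ∀ i, p i → w i = w' i)
    (hsum : ∀ i, ∑ v, w i v = 1) (hsum' : ∀ i, ∑ v, w' i v = 1)
    (f : (∀ i, X i) → ℝ)
    (hf : ∀ x y : ∀ i, X i, (∀ i, p i → x i = y i) → f x = f y) :
    ∑ x : ∀ i, X i, (∏ i, w i (x i)) * f x
      = ∑ x : ∀ i, X i, (∏ i, w' i (x i)) * f x := by
  rw [sum_pi_prod_aux p w hsum f hf, sum_pi_prod_aux p w' hsum' f hf]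
  refine Finset.sum_congr rfl fun y _ => ?_
  congr 1
  exact Finset.prod_congr rfl fun i _ => by rw [hw (i : ι) i.2]

/-! ### Softmax / global policy / kernel basic facts -/

lemma softmax_nonneg {Sn An : Type*} [Fintype An] [Nonempty An]
    (θn : Sn → An → ℝ) (s : Sn) (a : An) : 0 ≤ softmaxPol θn s a :=
  div_nonneg (Real.exp_nonneg _)
    (Finset.sum_nonneg fun _ _ => Real.exp_nonneg _)

lemma softmax_sum_one {Sn An : Type*} [Fintype An] [Nonempty An]
    (θn : Sn → An → ℝ) (s : Sn) : ∑ a, softmaxPol θn s a = 1 := by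
  have h : 0 < ∑ a' : An, Real.exp (θn s a') :=
    Finset.sum_pos (fun a _ => Real.exp_pos _) Finset.univ_nonempty
  simp only [softmaxPol]
  rw [← Finset.sum_div, div_self h.ne']

lemma gPolicy_nonneg {N : ℕ} {S A : Fin N → Type*} [∀ n, Fintype (A n)]
    [∀ n, Nonempty (A n)] (θ : ∀ n, S n → A n → ℝ) (s : ∀ n, S n) (a : ∀ n, A n) :
    0 ≤ gPolicy θ s a :=
  Finset.prod_nonneg fun k _ => softmax_nonneg _ _ _

lemma gPolicy_sum_one {N : ℕ} {S A : Fin N → Type*} [∀ n, Fintype (A n)]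
    [∀ n, Nonempty (A n)] (θ : ∀ n, S n → A n → ℝ) (s : ∀ n, S n) :
    ∑ a : ∀ n, A n, gPolicy θ s a = 1 := by
  simp only [gPolicy]
  rw [pi_sum_prod (fun k ak => softmaxPol (θ k) (s k) ak)]
  exact Finset.prod_eq_one fun k _ => softmax_sum_one _ _

lemma gKernel_sum_one {N : ℕ} {S A : Fin N → Type*} [∀ n, Fintype (S n)]
    (P : ∀ n, S n → A n → S n → ℝ) (hP1 : ∀ n sn an, ∑ s'n, P n sn an s'n = 1)
    (s : ∀ n, S n) (a : ∀ n, A n) :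
    ∑ s' : ∀ n, S n, gKernel P s a s' = 1 := by
  simp only [gKernel]
  rw [pi_sum_prod (fun k s'k => P k (s k) (a k) s'k)]
  exact Finset.prod_eq_one fun k _ => hP1 k _ _

/-! ### Local (single-agent) state distribution -/

/-- Single-agent state distribution at time `t`, starting from state `x`. -/
def locD {Sn An : Type*} [Fintype Sn] [Fintype An] (Pn : Sn → An → Sn → ℝ)
    (pol : Sn → An → ℝ) (x : Sn) : ℕ → Sn → ℝ
  | 0 => diracD x
  | t + 1 => fun u => ∑ v : Sn, ∑ a : An, locD Pn pol x t v * pol v a * Pn v a u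

lemma locD_sum_one {Sn An : Type*} [Fintype Sn] [Fintype An]
    (Pn : Sn → An → Sn → ℝ) (pol : Sn → An → ℝ)
    (hP : ∀ v a, ∑ u, Pn v a u = 1) (hpol : ∀ v, ∑ a, pol v a = 1)
    (x : Sn) : ∀ t, ∑ u, locD Pn pol x t u = 1 := by
  intro t
  induction t with
  | zero => simp [locD, diracD]
  | succ t ih =>
    simp only [locD]
    calc ∑ u, ∑ v, ∑ a, locD Pn pol x t v * pol v a * Pn v a u
        = ∑ v, ∑ a, ∑ u, locD Pn pol x t v * pol v a * Pn v a u := by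
          rw [Finset.sum_comm]
          exact Finset.sum_congr rfl fun v _ => Finset.sum_comm
      _ = ∑ v, ∑ a, locD Pn pol x t v * pol v a := by
          refine Finset.sum_congr rfl fun v _ => Finset.sum_congr rfl fun a _ => ?_
          rw [← Finset.mul_sum, hP, mul_one]
      _ = ∑ v, locD Pn pol x t v := by
          refine Finset.sum_congr rfl fun v _ => ?_
          rw [← Finset.mul_sum, hpol, mul_one]
      _ = 1 := ih

/-! ### Factorization of the global state distribution -/

lemma stateDist_pi {N : ℕ} {S A : Fin N → Type*}
    [∀ n, Fintype (S n)] [∀ n, Fintype (A n)]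
    (P : ∀ n, S n → A n → S n → ℝ) (θ : ∀ n, S n → A n → ℝ)
    (s0 : ∀ k, S k) (t : ℕ) :
    ∀ s : ∀ k, S k, stateDist (gKernel P) (gPolicy θ) (diracD s0) t s
      = ∏ k, locD (P k) (softmaxPol (θ k)) (s0 k) t (s k) := by
  induction t with
  | zero =>
    intro s
    simp only [stateDist, diracD, locD]
    by_cases h : s = s0
    · subst h; simp
    · rw [if_neg h]
      obtain ⟨k, hk⟩ : ∃ k, s k ≠ s0 k := by
        by_contra hc; push_neg at hc; exact h (funext hc)
      exact (Finset.prod_eq_zero (Finset.mem_univ k) (by simp [hk])).symm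
  | succ t ih =>
    intro s
    simp only [stateDist]
    calc ∑ u : ∀ k, S k, ∑ a : ∀ k, A k,
          stateDist (gKernel P) (gPolicy θ) (diracD s0) t u * gPolicy θ u a *
            gKernel P u a s
        = ∑ u : ∀ k, S k, ∑ a : ∀ k, A k, ∏ k,
            (locD (P k) (softmaxPol (θ k)) (s0 k) t (u k) *
              softmaxPol (θ k) (u k) (a k) * P k (u k) (a k) (s k)) := by
          refine Finset.sum_congr rfl fun u _ => Finset.sum_congr rfl fun a _ => ?_
          rw [ih u]
          simp [gPolicy, gKernel, Finset.prod_mul_distrib]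
      _ = ∑ u : ∀ k, S k, ∏ k, ∑ ak : A k,
            (locD (P k) (softmaxPol (θ k)) (s0 k) t (u k) *
              softmaxPol (θ k) (u k) ak * P k (u k) ak (s k)) := by
          refine Finset.sum_congr rfl fun u _ => ?_
          exact pi_sum_prod (fun k ak =>
            locD (P k) (softmaxPol (θ k)) (s0 k) t (u k) *
              softmaxPol (θ k) (u k) ak * P k (u k) ak (s k))
      _ = ∏ k, ∑ uk : S k, ∑ ak : A k,
            (locD (P k) (softmaxPol (θ k)) (s0 k) t uk *
              softmaxPol (θ k) uk ak * P k uk ak (s k)) :=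
          pi_sum_prod (fun k uk => ∑ ak : A k,
            locD (P k) (softmaxPol (θ k)) (s0 k) t uk *
              softmaxPol (θ k) uk ak * P k uk ak (s k))
      _ = ∏ k, locD (P k) (softmaxPol (θ k)) (s0 k) (t + 1) (s k) :=
          Finset.prod_congr rfl fun k _ => rfl

/-! ### Generic bounds on `stateDist`/`expReward` -/

lemma stateDist_nonneg {GS GA : Type*} [Fintype GS] [Fintype GA]
    (K : GS → GA → GS → ℝ) (p : GS → GA → ℝ) (ρ : GS → ℝ)
    (hK : ∀ s a s', 0 ≤ K s a s') (hp : ∀ s a, 0 ≤ p s a) (hρ : ∀ s, 0 ≤ ρ s) :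
    ∀ t s, 0 ≤ stateDist K p ρ t s := by
  intro t
  induction t with
  | zero => exact hρ
  | succ t ih =>
    intro s'
    exact Finset.sum_nonneg fun s _ => Finset.sum_nonneg fun a _ =>
      mul_nonneg (mul_nonneg (ih s) (hp s a)) (hK s a s')

lemma stateDist_mass {GS GA : Type*} [Fintype GS] [Fintype GA]
    (K : GS → GA → GS → ℝ) (p : GS → GA → ℝ) (ρ : GS → ℝ)
    (hK : ∀ s a, ∑ s', K s a s' = 1) (hp : ∀ s, ∑ a, p s a = 1)
    (hρ : ∑ s, ρ s = 1) :
    ∀ t, ∑ s, stateDist K p ρ t s = 1 := by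
  intro t
  induction t with
  | zero => exact hρ
  | succ t ih =>
    simp only [stateDist]
    calc ∑ s', ∑ s, ∑ a, stateDist K p ρ t s * p s a * K s a s'
        = ∑ s, ∑ a, ∑ s', stateDist K p ρ t s * p s a * K s a s' := by
          rw [Finset.sum_comm]
          exact Finset.sum_congr rfl fun s _ => Finset.sum_comm
      _ = ∑ s, ∑ a, stateDist K p ρ t s * p s a := by
          refine Finset.sum_congr rfl fun s _ => Finset.sum_congr rfl fun a _ => ?_
          rw [← Finset.mul_sum, hK, mul_one]
      _ = ∑ s, stateDist K p ρ t s := by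
          refine Finset.sum_congr rfl fun s _ => ?_
          rw [← Finset.mul_sum, hp, mul_one]
      _ = 1 := ih

lemma expReward_nonneg {GS GA : Type*} [Fintype GS] [Fintype GA]
    (K : GS → GA → GS → ℝ) (p : GS → GA → ℝ) (R : GS → GA → ℝ) (ρ : GS → ℝ)
    (hK : ∀ s a s', 0 ≤ K s a s') (hp : ∀ s a, 0 ≤ p s a) (hρ : ∀ s, 0 ≤ ρ s)
    (hR : ∀ s a, 0 ≤ R s a) (t : ℕ) : 0 ≤ expReward K p R ρ t :=
  Finset.sum_nonneg fun s _ => Finset.sum_nonneg fun a _ =>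
    mul_nonneg (mul_nonneg (stateDist_nonneg K p ρ hK hp hρ t s) (hp s a)) (hR s a)

lemma expReward_le_one {GS GA : Type*} [Fintype GS] [Fintype GA]
    (K : GS → GA → GS → ℝ) (p : GS → GA → ℝ) (R : GS → GA → ℝ) (ρ : GS → ℝ)
    (hK : ∀ s a s', 0 ≤ K s a s') (hp : ∀ s a, 0 ≤ p s a) (hρ : ∀ s, 0 ≤ ρ s)
    (hKs : ∀ s a, ∑ s', K s a s' = 1) (hps : ∀ s, ∑ a, p s a = 1) (hρs : ∑ s, ρ s = 1)
    (hR : ∀ s a, R s a ≤ 1) (t : ℕ) : expReward K p R ρ t ≤ 1 := by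
  have hd := stateDist_nonneg K p ρ hK hp hρ t
  calc expReward K p R ρ t
      ≤ ∑ s, ∑ a, stateDist K p ρ t s * p s a := by
        refine Finset.sum_le_sum fun s _ => Finset.sum_le_sum fun a _ => ?_
        calc stateDist K p ρ t s * p s a * R s a
            ≤ stateDist K p ρ t s * p s a * 1 :=
              mul_le_mul_of_nonneg_left (hR s a) (mul_nonneg (hd s) (hp s a))
          _ = stateDist K p ρ t s * p s a := mul_one _
    _ = ∑ s, stateDist K p ρ t s := by
        refine Finset.sum_congr rfl fun s _ => ?_
        rw [← Finset.mul_sum, hps, mul_one]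
    _ = 1 := stateDist_mass K p ρ hKs hps hρs t

lemma diracD_nonneg {GS : Type*} (s0 : GS) (s : GS) : 0 ≤ diracD s0 s := by
  unfold diracD; split <;> norm_num

lemma diracD_mass {GS : Type*} [Fintype GS] (s0 : GS) : ∑ s, diracD s0 s = 1 := by
  simp [diracD]

end QFunAux


/-- Exact decomposition of the global Q-function: the expected
discounted local reward of agent `n` given the initial state-action pair depends on it
only through the neighborhood components, and the global Q-function is the average of
the local Q-functions. -/
theorem q_function_decomposition
    {N : ℕ} (hN : 1 ≤ N)
    {S A : Fin N → Type*}
    [∀ n, Fintype (S n)] [∀ n, Nonempty (S n)]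
    [∀ n, Fintype (A n)] [∀ n, Nonempty (A n)]
    (Nbr : Fin N → Finset (Fin N)) (hNbr : ∀ n, n ∈ Nbr n)
    (r : Fin N → (∀ k, S k) → (∀ k, A k) → ℝ)
    (hr0 : ∀ n s a, 0 ≤ r n s a) (hr1 : ∀ n s a, r n s a ≤ 1)
    (hrloc : ∀ n (s s' : ∀ k, S k) (a a' : ∀ k, A k),
      (∀ k ∈ Nbr n, s k = s' k) → (∀ k ∈ Nbr n, a k = a' k) → r n s a = r n s' a')
    (P : ∀ n, S n → A n → S n → ℝ)
    (hP0 : ∀ n sn an s'n, 0 ≤ P n sn an s'n)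
    (hP1 : ∀ n sn an, ∑ s'n, P n sn an s'n = 1)
    (γ : ℝ) (hγ0 : 0 < γ) (hγ1 : γ < 1)
    (θ : ∀ n, S n → A n → ℝ) (n : Fin N) :
    (∀ (s s' : ∀ k, S k) (a a' : ∀ k, A k),
      (∀ k ∈ Nbr n, s k = s' k) → (∀ k ∈ Nbr n, a k = a' k) →
      valueQ γ (gKernel P) (gPolicy θ) (r n) s a
        = valueQ γ (gKernel P) (gPolicy θ) (r n) s' a') ∧
    (∀ (s : ∀ k, S k) (a : ∀ k, A k),
      valueQ γ (gKernel P) (gPolicy θ) (fun s' a' => (N : ℝ)⁻¹ * ∑ m, r m s' a') s a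
        = (N : ℝ)⁻¹ * ∑ m, valueQ γ (gKernel P) (gPolicy θ) (r m) s a) := by
  classical
  have hloc_sum : ∀ (k : Fin N) (x : S k) (t : ℕ),
      ∑ u, locD (P k) (softmaxPol (θ k)) x t u = 1 := fun k x t =>
    locD_sum_one (P k) (softmaxPol (θ k)) (hP1 k) (fun v => softmax_sum_one (θ k) v) x t
  -- locality of the one-step expected reward in the state variable
  have hf : ∀ (s s' : ∀ k, S k), (∀ k ∈ Nbr n, s k = s' k) →
      (∑ a : ∀ k, A k, gPolicy θ s a * r n s a)
        = ∑ a : ∀ k, A k, gPolicy θ s' a * r n s' a := by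
    intro s s' hss
    calc ∑ a : ∀ k, A k, gPolicy θ s a * r n s a
        = ∑ a : ∀ k, A k, (∏ k, softmaxPol (θ k) (s k) (a k)) * r n s' a := by
          refine Finset.sum_congr rfl fun a _ => ?_
          rw [hrloc n s s' a a hss (fun _ _ => rfl)]; rfl
      _ = ∑ a : ∀ k, A k, (∏ k, softmaxPol (θ k) (s' k) (a k)) * r n s' a := by
          refine sum_pi_prod_local (fun k => k ∈ Nbr n) _ _ ?_ ?_ ?_ (r n s') ?_
          · intro k hk
            have := hss k hk
            funext ak
            rw [this]
          · intro k; exact softmax_sum_one _ _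
          · intro k; exact softmax_sum_one _ _
          · intro a a' haa; exact hrloc n s' s' a a' (fun _ _ => rfl) haa
      _ = ∑ a : ∀ k, A k, gPolicy θ s' a * r n s' a := rfl
  -- factored form of the expected reward starting from a dirac
  have hER : ∀ (R : (∀ k, S k) → (∀ k, A k) → ℝ) (s0 : ∀ k, S k) (t : ℕ),
      expReward (gKernel P) (gPolicy θ) R (diracD s0) t
        = ∑ s : ∀ k, S k, (∏ k, locD (P k) (softmaxPol (θ k)) (s0 k) t (s k)) *
            (∑ a : ∀ k, A k, gPolicy θ s a * R s a) := by
    intro R s0 t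
    simp only [expReward]
    refine Finset.sum_congr rfl fun s _ => ?_
    rw [Finset.mul_sum]
    refine Finset.sum_congr rfl fun a _ => ?_
    rw [stateDist_pi P θ s0 t s, mul_assoc]
  -- locality of the expected reward in the initial state
  have hERloc : ∀ (s0 s0' : ∀ k, S k), (∀ k ∈ Nbr n, s0 k = s0' k) → ∀ t : ℕ,
      expReward (gKernel P) (gPolicy θ) (r n) (diracD s0) t
        = expReward (gKernel P) (gPolicy θ) (r n) (diracD s0') t := by
    intro s0 s0' h t
    rw [hER, hER]
    refine sum_pi_prod_local (fun k => k ∈ Nbr n) _ _ ?_ ?_ ?_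
      (fun s => ∑ a : ∀ k, A k, gPolicy θ s a * r n s a) ?_
    · intro k hk; rw [h k hk]
    · intro k; exact hloc_sum k _ t
    · intro k; exact hloc_sum k _ t
    · intro s s' hss; exact hf s s' hss
  -- locality of the value function
  have hVloc : ∀ (s0 s0' : ∀ k, S k), (∀ k ∈ Nbr n, s0 k = s0' k) →
      valueV γ (gKernel P) (gPolicy θ) (r n) s0
        = valueV γ (gKernel P) (gPolicy θ) (r n) s0' := by
    intro s0 s0' h
    simp only [valueV, valueD]
    exact tsum_congr fun t => by rw [hERloc s0 s0' h t]
  constructor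
  · -- Part 1: locality of the Q-function
    intro s s' a a' hs ha
    simp only [valueQ]
    have h1 : r n s a = r n s' a' := hrloc n s s' a a' hs ha
    have h2 : ∑ x : ∀ k, S k, gKernel P s a x * valueV γ (gKernel P) (gPolicy θ) (r n) x
        = ∑ x : ∀ k, S k, gKernel P s' a' x * valueV γ (gKernel P) (gPolicy θ) (r n) x := by
      simp only [gKernel]
      refine sum_pi_prod_local (fun k => k ∈ Nbr n) (fun k => P k (s k) (a k))
        (fun k => P k (s' k) (a' k)) ?_ (fun k => hP1 k _ _) (fun k => hP1 k _ _)
        (valueV γ (gKernel P) (gPolicy θ) (r n)) hVloc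
      intro k hk
      show P k (s k) (a k) = P k (s' k) (a' k)
      rw [hs k hk, ha k hk]
    rw [h1, h2]
  · -- Part 2: decomposition into local Q-functions
    intro s a
    have hK0 : ∀ (s : ∀ k, S k) (a : ∀ k, A k) (s' : ∀ k, S k),
        0 ≤ gKernel P s a s' := fun s a s' => Finset.prod_nonneg fun k _ => hP0 k _ _ _
    have hKs : ∀ (s : ∀ k, S k) (a : ∀ k, A k), ∑ s', gKernel P s a s' = 1 :=
      gKernel_sum_one P hP1
    have hp0 := gPolicy_nonneg θ
    have hps := gPolicy_sum_one θ
    have hsummable : ∀ (m : Fin N) (s0 : ∀ k, S k),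
        Summable (fun t : ℕ =>
          γ ^ t * expReward (gKernel P) (gPolicy θ) (r m) (diracD s0) t) := by
      intro m s0
      refine Summable.of_nonneg_of_le (fun t => mul_nonneg (pow_nonneg hγ0.le t)
        (expReward_nonneg _ _ (r m) _ hK0 hp0 (diracD_nonneg s0) (hr0 m) t)) (fun t => ?_)
        (summable_geometric_of_lt_one hγ0.le hγ1)
      calc γ ^ t * expReward (gKernel P) (gPolicy θ) (r m) (diracD s0) t
          ≤ γ ^ t * 1 := mul_le_mul_of_nonneg_left
            (expReward_le_one _ _ (r m) _ hK0 hp0 (diracD_nonneg s0)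
              hKs hps (diracD_mass s0) (hr1 m) t) (pow_nonneg hγ0.le t)
        _ = γ ^ t := mul_one _
    have hmulsum : ∀ (c x : ℝ) (g : Fin N → ℝ),
        x * (c * ∑ m, g m) = ∑ m, c * (x * g m) := by
      intro c x g
      rw [Finset.mul_sum, Finset.mul_sum]
      exact Finset.sum_congr rfl fun m _ => by ring
    have hERavg : ∀ (ρ : (∀ k, S k) → ℝ) (t : ℕ),
        expReward (gKernel P) (gPolicy θ) (fun s' a' => (N : ℝ)⁻¹ * ∑ m, r m s' a') ρ t
          = (N : ℝ)⁻¹ * ∑ m, expReward (gKernel P) (gPolicy θ) (r m) ρ t := by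
      intro ρ t
      simp only [expReward]
      calc ∑ s : ∀ k, S k, ∑ a : ∀ k, A k,
            stateDist (gKernel P) (gPolicy θ) ρ t s * gPolicy θ s a *
              ((N : ℝ)⁻¹ * ∑ m, r m s a)
          = ∑ s : ∀ k, S k, ∑ a : ∀ k, A k, ∑ m, (N : ℝ)⁻¹ *
              (stateDist (gKernel P) (gPolicy θ) ρ t s * gPolicy θ s a * r m s a) := by
            refine Finset.sum_congr rfl fun s _ => Finset.sum_congr rfl fun a _ => ?_
            rw [hmulsum]
        _ = ∑ s : ∀ k, S k, ∑ m, ∑ a : ∀ k, A k, (N : ℝ)⁻¹ *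
              (stateDist (gKernel P) (gPolicy θ) ρ t s * gPolicy θ s a * r m s a) :=
            Finset.sum_congr rfl fun s _ => Finset.sum_comm
        _ = ∑ m, ∑ s : ∀ k, S k, ∑ a : ∀ k, A k, (N : ℝ)⁻¹ *
              (stateDist (gKernel P) (gPolicy θ) ρ t s * gPolicy θ s a * r m s a) :=
            Finset.sum_comm
        _ = (N : ℝ)⁻¹ * ∑ m, ∑ s : ∀ k, S k, ∑ a : ∀ k, A k,
              stateDist (gKernel P) (gPolicy θ) ρ t s * gPolicy θ s a * r m s a := by
            rw [Finset.mul_sum]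
            refine Finset.sum_congr rfl fun m _ => ?_
            rw [Finset.mul_sum]
            refine Finset.sum_congr rfl fun x _ => ?_
            rw [Finset.mul_sum]
    have hVavg : ∀ s0 : ∀ k, S k,
        valueV γ (gKernel P) (gPolicy θ) (fun s' a' => (N : ℝ)⁻¹ * ∑ m, r m s' a') s0
          = (N : ℝ)⁻¹ * ∑ m, valueV γ (gKernel P) (gPolicy θ) (r m) s0 := by
      intro s0
      simp only [valueV, valueD]
      calc ∑' t : ℕ, γ ^ t * expReward (gKernel P) (gPolicy θ)
            (fun s' a' => (N : ℝ)⁻¹ * ∑ m, r m s' a') (diracD s0) t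
          = ∑' t : ℕ, ∑ m, (N : ℝ)⁻¹ *
              (γ ^ t * expReward (gKernel P) (gPolicy θ) (r m) (diracD s0) t) := by
            refine tsum_congr fun t => ?_
            rw [hERavg, hmulsum]
        _ = ∑ m, ∑' t : ℕ, (N : ℝ)⁻¹ *
              (γ ^ t * expReward (gKernel P) (gPolicy θ) (r m) (diracD s0) t) :=
            Summable.tsum_finsetSum fun m _ => (hsummable m s0).mul_left _
        _ = ∑ m, (N : ℝ)⁻¹ *
              ∑' t : ℕ, γ ^ t * expReward (gKernel P) (gPolicy θ) (r m) (diracD s0) t :=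
            Finset.sum_congr rfl fun m _ => tsum_mul_left
        _ = (N : ℝ)⁻¹ * ∑ m,
              ∑' t : ℕ, γ ^ t * expReward (gKernel P) (gPolicy θ) (r m) (diracD s0) t :=
            (Finset.mul_sum _ _ _).symm
    simp only [valueQ]
    have h3 : ∑ s' : ∀ k, S k, gKernel P s a s' * valueV γ (gKernel P) (gPolicy θ)
          (fun s' a' => (N : ℝ)⁻¹ * ∑ m, r m s' a') s'
        = (N : ℝ)⁻¹ * ∑ m, ∑ s' : ∀ k, S k,
            gKernel P s a s' * valueV γ (gKernel P) (gPolicy θ) (r m) s' := by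
      calc ∑ s' : ∀ k, S k, gKernel P s a s' * valueV γ (gKernel P) (gPolicy θ)
            (fun s' a' => (N : ℝ)⁻¹ * ∑ m, r m s' a') s'
          = ∑ s' : ∀ k, S k, ∑ m, (N : ℝ)⁻¹ *
              (gKernel P s a s' * valueV γ (gKernel P) (gPolicy θ) (r m) s') := by
            refine Finset.sum_congr rfl fun s' _ => ?_
            rw [hVavg s', hmulsum]
        _ = ∑ m, ∑ s' : ∀ k, S k, (N : ℝ)⁻¹ *
              (gKernel P s a s' * valueV γ (gKernel P) (gPolicy θ) (r m) s') :=
            Finset.sum_comm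
        _ = (N : ℝ)⁻¹ * ∑ m, ∑ s' : ∀ k, S k,
              gKernel P s a s' * valueV γ (gKernel P) (gPolicy θ) (r m) s' := by
            rw [Finset.mul_sum]
            exact Finset.sum_congr rfl fun m _ => (Finset.mul_sum _ _ _).symm
    rw [h3]
    have hfin : ∀ (c : ℝ) (g h : Fin N → ℝ),
        c * ∑ m, g m + γ * (c * ∑ m, h m) = c * ∑ m, (g m + γ * h m) := by
      intro c g h
      rw [Finset.mul_sum, Finset.mul_sum, Finset.mul_sum, ← Finset.sum_add_distrib,
        Finset.mul_sum]
      exact Finset.sum_congr rfl fun m _ => by ring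
    exact hfin _ _ _
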